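/- Let π be the stationary distribution of the queueing-inventory process Z. Then for every n ∈ ℕ₀: P(X₁+X₂=n, 0<Y≤s)·(λ₁+p·λ₂) + P(X₁+X₂=n, Y>s)·(λ₁+λ₂) = P(X₁+X₂=n+1, 0<Y≤b)·μ. -/
import Mathlib


/-- Global balance equations π·Q = 0 of the queueing-inventory process `Z` on
`E = ℕ₀ × ℕ₀ × {0,…,b}` with priority parameter `p`, threshold `s`, base stock `b`. -/
def GlobalBalance (b s : ℕ) (lam1 lam2 mu nu p : ℝ) (pi : ℕ → ℕ → ℕ → ℝ) : Prop :=
  ∀ n₁ n₂ k, k ≤ b →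
    pi n₁ n₂ k *
        ((lam1 + p * lam2) * (if 0 < k ∧ k ≤ s then 1 else 0)
          + (lam1 + lam2) * (if s < k then 1 else 0)
          + mu * (if 0 < n₁ + n₂ then 1 else 0) * (if 0 < k then 1 else 0)
          + nu * (if k < b then 1 else 0))
      = pi (n₁ - 1) n₂ k * lam1 * (if 0 < n₁ then 1 else 0) * (if 0 < k then 1 else 0)
        + pi n₁ (n₂ - 1) k * (p * lam2) * (if 0 < n₂ then 1 else 0) *
            (if 0 < k ∧ k ≤ s then 1 else 0)
        + pi n₁ (n₂ - 1) k * lam2 * (if 0 < n₂ then 1 else 0) * (if s < k then 1 else 0)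
        + pi (n₁ + 1) n₂ (k + 1) * mu * (if k < b then 1 else 0)
        + pi n₁ (n₂ + 1) (k + 1) * mu * (if n₁ = 0 then 1 else 0) * (if k < b then 1 else 0)
        + pi n₁ n₂ (k - 1) * nu * (if 0 < k then 1 else 0)

open Finset

lemma aux_sum_ite {N : ℕ} {P : ℕ → Prop} [DecidablePred P] {f g : ℕ → ℝ} {c : ℝ} {T : Finset ℕ}
    (hT : (Finset.range N).filter P = T)
    (hfg : ∀ k, f k = if P k then c * g k else 0) :
    ∑ k ∈ Finset.range N, f k = c * ∑ k ∈ T, g k := by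
  rw [Finset.mul_sum, ← hT, Finset.sum_filter]
  exact Finset.sum_congr rfl fun k _ => hfg k

lemma filt1 {s b : ℕ} (hsb : s ≤ b) :
    (Finset.range (b+1)).filter (fun k => 0 < k ∧ k ≤ s) = Finset.Icc 1 s := by
  ext k; simp only [Finset.mem_filter, Finset.mem_range, Finset.mem_Icc, Nat.lt_succ_iff]; omega

lemma filt2 {s b : ℕ} :
    (Finset.range (b+1)).filter (fun k => s < k) = Finset.Icc (s+1) b := by
  ext k; simp only [Finset.mem_filter, Finset.mem_range, Finset.mem_Icc, Nat.lt_succ_iff]; omega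

lemma filt3 {b : ℕ} :
    (Finset.range (b+1)).filter (fun k => 0 < k) = Finset.Icc 1 b := by
  ext k; simp only [Finset.mem_filter, Finset.mem_range, Finset.mem_Icc, Nat.lt_succ_iff]; omega

lemma filt4 {b : ℕ} :
    (Finset.range (b+1)).filter (fun k => k < b) = Finset.range b := by
  ext k; simp only [Finset.mem_filter, Finset.mem_range, Nat.lt_succ_iff]; omega

lemma shiftIcc (b : ℕ) (f : ℕ → ℝ) :
    ∑ k ∈ Finset.range b, f (k+1) = ∑ k ∈ Finset.Icc 1 b, f k := by
  rw [← Finset.Ico_add_one_right_eq_Icc, Finset.sum_Ico_eq_sum_range]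
  simp [Nat.add_comm]

lemma innerL (b s : ℕ) (lam1 lam2 mu nu p : ℝ) (pi : ℕ → ℕ → ℕ → ℝ) (hsb : s ≤ b)
    (n₁ n₂ : ℕ) :
    ∑ k ∈ Finset.range (b+1), pi n₁ n₂ k *
        ((lam1 + p * lam2) * (if 0 < k ∧ k ≤ s then 1 else 0)
          + (lam1 + lam2) * (if s < k then 1 else 0)
          + mu * (if 0 < n₁ + n₂ then 1 else 0) * (if 0 < k then 1 else 0)
          + nu * (if k < b then 1 else 0))
    = (lam1 + p * lam2) * (∑ k ∈ Finset.Icc 1 s, pi n₁ n₂ k)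
      + (lam1 + lam2) * (∑ k ∈ Finset.Icc (s+1) b, pi n₁ n₂ k)
      + mu * (if 0 < n₁ + n₂ then 1 else 0) * (∑ k ∈ Finset.Icc 1 b, pi n₁ n₂ k)
      + nu * (∑ k ∈ Finset.range b, pi n₁ n₂ k) := by
  have h1 : ∑ k ∈ Finset.range (b+1), pi n₁ n₂ k *
      ((lam1 + p * lam2) * (if 0 < k ∧ k ≤ s then 1 else 0))
      = (lam1 + p * lam2) * ∑ k ∈ Finset.Icc 1 s, pi n₁ n₂ k :=
    aux_sum_ite (filt1 hsb) (fun k => by split_ifs <;> ring)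
  have h2 : ∑ k ∈ Finset.range (b+1), pi n₁ n₂ k *
      ((lam1 + lam2) * (if s < k then 1 else 0))
      = (lam1 + lam2) * ∑ k ∈ Finset.Icc (s+1) b, pi n₁ n₂ k :=
    aux_sum_ite filt2 (fun k => by split_ifs <;> ring)
  have h3 : ∑ k ∈ Finset.range (b+1), pi n₁ n₂ k *
      (mu * (if 0 < n₁ + n₂ then 1 else 0) * (if 0 < k then 1 else 0))
      = (mu * (if 0 < n₁ + n₂ then 1 else 0)) * ∑ k ∈ Finset.Icc 1 b, pi n₁ n₂ k :=
    aux_sum_ite filt3 (fun k => by split_ifs <;> ring)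
  have h4 : ∑ k ∈ Finset.range (b+1), pi n₁ n₂ k * (nu * (if k < b then 1 else 0))
      = nu * ∑ k ∈ Finset.range b, pi n₁ n₂ k :=
    aux_sum_ite filt4 (fun k => by split_ifs <;> ring)
  simp only [mul_add, Finset.sum_add_distrib]
  rw [h1, h2, h3, h4]

lemma innerR (b s : ℕ) (lam1 lam2 mu nu p : ℝ) (pi : ℕ → ℕ → ℕ → ℝ) (hsb : s ≤ b)
    (n₁ n₂ : ℕ) :
    ∑ k ∈ Finset.range (b+1),
      (pi (n₁ - 1) n₂ k * lam1 * (if 0 < n₁ then 1 else 0) * (if 0 < k then 1 else 0)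
        + pi n₁ (n₂ - 1) k * (p * lam2) * (if 0 < n₂ then 1 else 0) *
            (if 0 < k ∧ k ≤ s then 1 else 0)
        + pi n₁ (n₂ - 1) k * lam2 * (if 0 < n₂ then 1 else 0) * (if s < k then 1 else 0)
        + pi (n₁ + 1) n₂ (k + 1) * mu * (if k < b then 1 else 0)
        + pi n₁ (n₂ + 1) (k + 1) * mu * (if n₁ = 0 then 1 else 0) * (if k < b then 1 else 0)
        + pi n₁ n₂ (k - 1) * nu * (if 0 < k then 1 else 0))
    = lam1 * (if 0 < n₁ then 1 else 0) * (∑ k ∈ Finset.Icc 1 b, pi (n₁ - 1) n₂ k)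
      + p * lam2 * (if 0 < n₂ then 1 else 0) * (∑ k ∈ Finset.Icc 1 s, pi n₁ (n₂ - 1) k)
      + lam2 * (if 0 < n₂ then 1 else 0) * (∑ k ∈ Finset.Icc (s+1) b, pi n₁ (n₂ - 1) k)
      + mu * (∑ k ∈ Finset.Icc 1 b, pi (n₁ + 1) n₂ k)
      + mu * (if n₁ = 0 then 1 else 0) * (∑ k ∈ Finset.Icc 1 b, pi n₁ (n₂ + 1) k)
      + nu * (∑ k ∈ Finset.range b, pi n₁ n₂ k) := by
  have h1 : ∑ k ∈ Finset.range (b+1),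
      pi (n₁ - 1) n₂ k * lam1 * (if 0 < n₁ then 1 else 0) * (if 0 < k then 1 else 0)
      = (lam1 * (if 0 < n₁ then 1 else 0)) * ∑ k ∈ Finset.Icc 1 b, pi (n₁ - 1) n₂ k :=
    aux_sum_ite filt3 (fun k => by split_ifs <;> ring)
  have h2 : ∑ k ∈ Finset.range (b+1),
      pi n₁ (n₂ - 1) k * (p * lam2) * (if 0 < n₂ then 1 else 0) *
        (if 0 < k ∧ k ≤ s then 1 else 0)
      = (p * lam2 * (if 0 < n₂ then 1 else 0)) * ∑ k ∈ Finset.Icc 1 s, pi n₁ (n₂ - 1) k :=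
    aux_sum_ite (filt1 hsb) (fun k => by split_ifs <;> ring)
  have h3 : ∑ k ∈ Finset.range (b+1),
      pi n₁ (n₂ - 1) k * lam2 * (if 0 < n₂ then 1 else 0) * (if s < k then 1 else 0)
      = (lam2 * (if 0 < n₂ then 1 else 0)) * ∑ k ∈ Finset.Icc (s+1) b, pi n₁ (n₂ - 1) k :=
    aux_sum_ite filt2 (fun k => by split_ifs <;> ring)
  have h4 : ∑ k ∈ Finset.range (b+1),
      pi (n₁ + 1) n₂ (k + 1) * mu * (if k < b then 1 else 0)
      = mu * ∑ k ∈ Finset.range b, pi (n₁ + 1) n₂ (k + 1) :=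
    aux_sum_ite filt4 (fun k => by split_ifs <;> ring)
  have h5 : ∑ k ∈ Finset.range (b+1),
      pi n₁ (n₂ + 1) (k + 1) * mu * (if n₁ = 0 then 1 else 0) * (if k < b then 1 else 0)
      = (mu * (if n₁ = 0 then 1 else 0)) * ∑ k ∈ Finset.range b, pi n₁ (n₂ + 1) (k + 1) :=
    aux_sum_ite filt4 (fun k => by split_ifs <;> ring)
  have h6 : ∑ k ∈ Finset.range (b+1),
      pi n₁ n₂ (k - 1) * nu * (if 0 < k then 1 else 0)
      = nu * ∑ k ∈ Finset.Icc 1 b, pi n₁ n₂ (k - 1) :=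
    aux_sum_ite filt3 (fun k => by split_ifs <;> ring)
  have h6' : ∑ k ∈ Finset.Icc 1 b, pi n₁ n₂ (k - 1) = ∑ k ∈ Finset.range b, pi n₁ n₂ k := by
    rw [← shiftIcc b (fun k => pi n₁ n₂ (k - 1))]
    exact Finset.sum_congr rfl fun k _ => by simp
  simp only [Finset.sum_add_distrib]
  rw [h1, h2, h3, h4, h5, h6, h6', shiftIcc b (fun k => pi (n₁+1) n₂ k),
    shiftIcc b (fun k => pi n₁ (n₂+1) k)]

lemma shift_down (m : ℕ) (g : ℕ → ℝ) :
    ∑ i ∈ Finset.range (m+1), (if 0 < i then g (i-1) else 0) = ∑ i ∈ Finset.range m, g i := by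
  rw [Finset.sum_range_succ']
  simp

lemma cut_last (m : ℕ) (g : ℕ → ℝ) :
    ∑ i ∈ Finset.range (m+1), (if i < m then g i else 0) = ∑ i ∈ Finset.range m, g i := by
  rw [Finset.sum_range_succ, if_neg (lt_irrefl m), add_zero]
  exact Finset.sum_congr rfl fun i hi => if_pos (Finset.mem_range.mp hi)

lemma first_term (m : ℕ) (g : ℕ → ℝ) :
    ∑ i ∈ Finset.range (m+1), (if i = 0 then g i else 0) = g 0 := by
  rw [Finset.sum_range_succ']
  simp

lemma level_balance (b s : ℕ) (lam1 lam2 mu nu p : ℝ) (pi : ℕ → ℕ → ℕ → ℝ)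
    (hsb : s ≤ b)
    (hGB : ∀ n₁ n₂ k, k ≤ b →
      pi n₁ n₂ k *
          ((lam1 + p * lam2) * (if 0 < k ∧ k ≤ s then 1 else 0)
            + (lam1 + lam2) * (if s < k then 1 else 0)
            + mu * (if 0 < n₁ + n₂ then 1 else 0) * (if 0 < k then 1 else 0)
            + nu * (if k < b then 1 else 0))
        = pi (n₁ - 1) n₂ k * lam1 * (if 0 < n₁ then 1 else 0) * (if 0 < k then 1 else 0)
          + pi n₁ (n₂ - 1) k * (p * lam2) * (if 0 < n₂ then 1 else 0) *
              (if 0 < k ∧ k ≤ s then 1 else 0)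
          + pi n₁ (n₂ - 1) k * lam2 * (if 0 < n₂ then 1 else 0) * (if s < k then 1 else 0)
          + pi (n₁ + 1) n₂ (k + 1) * mu * (if k < b then 1 else 0)
          + pi n₁ (n₂ + 1) (k + 1) * mu * (if n₁ = 0 then 1 else 0) * (if k < b then 1 else 0)
          + pi n₁ n₂ (k - 1) * nu * (if 0 < k then 1 else 0))
    (m : ℕ) :
    (∑ n₁ ∈ Finset.range (m+1), ∑ k ∈ Finset.Icc 1 s, pi n₁ (m - n₁) k) * (lam1 + p * lam2)
      + (∑ n₁ ∈ Finset.range (m+1), ∑ k ∈ Finset.Icc (s+1) b, pi n₁ (m - n₁) k) * (lam1 + lam2)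
      + (if 0 < m then (1:ℝ) else 0) * mu *
          (∑ n₁ ∈ Finset.range (m+1), ∑ k ∈ Finset.Icc 1 b, pi n₁ (m - n₁) k)
    = lam1 * (∑ n₁ ∈ Finset.range m, ∑ k ∈ Finset.Icc 1 b, pi n₁ (m - 1 - n₁) k)
      + p * lam2 * (∑ n₁ ∈ Finset.range m, ∑ k ∈ Finset.Icc 1 s, pi n₁ (m - 1 - n₁) k)
      + lam2 * (∑ n₁ ∈ Finset.range m, ∑ k ∈ Finset.Icc (s+1) b, pi n₁ (m - 1 - n₁) k)
      + mu * (∑ n₁ ∈ Finset.range (m+2), ∑ k ∈ Finset.Icc 1 b, pi n₁ (m + 1 - n₁) k) := by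
  -- the summed balance equation over the level set
  have H : ∑ n₁ ∈ Finset.range (m+1),
        ((lam1 + p * lam2) * (∑ k ∈ Finset.Icc 1 s, pi n₁ (m - n₁) k)
          + (lam1 + lam2) * (∑ k ∈ Finset.Icc (s+1) b, pi n₁ (m - n₁) k)
          + mu * (if 0 < n₁ + (m - n₁) then 1 else 0) *
              (∑ k ∈ Finset.Icc 1 b, pi n₁ (m - n₁) k)
          + nu * (∑ k ∈ Finset.range b, pi n₁ (m - n₁) k))
      = ∑ n₁ ∈ Finset.range (m+1),
        (lam1 * (if 0 < n₁ then 1 else 0) * (∑ k ∈ Finset.Icc 1 b, pi (n₁ - 1) (m - n₁) k)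
          + p * lam2 * (if 0 < m - n₁ then 1 else 0) *
              (∑ k ∈ Finset.Icc 1 s, pi n₁ (m - n₁ - 1) k)
          + lam2 * (if 0 < m - n₁ then 1 else 0) *
              (∑ k ∈ Finset.Icc (s+1) b, pi n₁ (m - n₁ - 1) k)
          + mu * (∑ k ∈ Finset.Icc 1 b, pi (n₁ + 1) (m - n₁) k)
          + mu * (if n₁ = 0 then 1 else 0) * (∑ k ∈ Finset.Icc 1 b, pi n₁ (m - n₁ + 1) k)
          + nu * (∑ k ∈ Finset.range b, pi n₁ (m - n₁) k)) := by
    refine Finset.sum_congr rfl fun n₁ _ => ?_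
    calc (lam1 + p * lam2) * (∑ k ∈ Finset.Icc 1 s, pi n₁ (m - n₁) k)
          + (lam1 + lam2) * (∑ k ∈ Finset.Icc (s+1) b, pi n₁ (m - n₁) k)
          + mu * (if 0 < n₁ + (m - n₁) then 1 else 0) *
              (∑ k ∈ Finset.Icc 1 b, pi n₁ (m - n₁) k)
          + nu * (∑ k ∈ Finset.range b, pi n₁ (m - n₁) k)
        = ∑ k ∈ Finset.range (b+1), pi n₁ (m - n₁) k *
            ((lam1 + p * lam2) * (if 0 < k ∧ k ≤ s then 1 else 0)
              + (lam1 + lam2) * (if s < k then 1 else 0)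
              + mu * (if 0 < n₁ + (m - n₁) then 1 else 0) * (if 0 < k then 1 else 0)
              + nu * (if k < b then 1 else 0)) :=
        (innerL b s lam1 lam2 mu nu p pi hsb n₁ (m - n₁)).symm
      _ = ∑ k ∈ Finset.range (b+1),
            (pi (n₁ - 1) (m - n₁) k * lam1 * (if 0 < n₁ then 1 else 0) * (if 0 < k then 1 else 0)
              + pi n₁ (m - n₁ - 1) k * (p * lam2) * (if 0 < m - n₁ then 1 else 0) *
                  (if 0 < k ∧ k ≤ s then 1 else 0)
              + pi n₁ (m - n₁ - 1) k * lam2 * (if 0 < m - n₁ then 1 else 0) *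
                  (if s < k then 1 else 0)
              + pi (n₁ + 1) (m - n₁) (k + 1) * mu * (if k < b then 1 else 0)
              + pi n₁ (m - n₁ + 1) (k + 1) * mu * (if n₁ = 0 then 1 else 0) *
                  (if k < b then 1 else 0)
              + pi n₁ (m - n₁) (k - 1) * nu * (if 0 < k then 1 else 0)) :=
        Finset.sum_congr rfl fun k hk =>
          hGB n₁ (m - n₁) k (Nat.lt_succ_iff.mp (Finset.mem_range.mp hk))
      _ = _ := innerR b s lam1 lam2 mu nu p pi hsb n₁ (m - n₁)
  -- simplify the left-hand side of H
  have HL : ∑ n₁ ∈ Finset.range (m+1),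
        ((lam1 + p * lam2) * (∑ k ∈ Finset.Icc 1 s, pi n₁ (m - n₁) k)
          + (lam1 + lam2) * (∑ k ∈ Finset.Icc (s+1) b, pi n₁ (m - n₁) k)
          + mu * (if 0 < n₁ + (m - n₁) then 1 else 0) *
              (∑ k ∈ Finset.Icc 1 b, pi n₁ (m - n₁) k)
          + nu * (∑ k ∈ Finset.range b, pi n₁ (m - n₁) k))
      = (lam1 + p * lam2) * (∑ n₁ ∈ Finset.range (m+1), ∑ k ∈ Finset.Icc 1 s, pi n₁ (m - n₁) k)
        + (lam1 + lam2) *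
            (∑ n₁ ∈ Finset.range (m+1), ∑ k ∈ Finset.Icc (s+1) b, pi n₁ (m - n₁) k)
        + (mu * (if 0 < m then 1 else 0)) *
            (∑ n₁ ∈ Finset.range (m+1), ∑ k ∈ Finset.Icc 1 b, pi n₁ (m - n₁) k)
        + nu * (∑ n₁ ∈ Finset.range (m+1), ∑ k ∈ Finset.range b, pi n₁ (m - n₁) k) := by
    have e : ∀ n₁ ∈ Finset.range (m+1),
        (lam1 + p * lam2) * (∑ k ∈ Finset.Icc 1 s, pi n₁ (m - n₁) k)
          + (lam1 + lam2) * (∑ k ∈ Finset.Icc (s+1) b, pi n₁ (m - n₁) k)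
          + mu * (if 0 < n₁ + (m - n₁) then 1 else 0) *
              (∑ k ∈ Finset.Icc 1 b, pi n₁ (m - n₁) k)
          + nu * (∑ k ∈ Finset.range b, pi n₁ (m - n₁) k)
        = (lam1 + p * lam2) * (∑ k ∈ Finset.Icc 1 s, pi n₁ (m - n₁) k)
          + (lam1 + lam2) * (∑ k ∈ Finset.Icc (s+1) b, pi n₁ (m - n₁) k)
          + (mu * (if 0 < m then 1 else 0)) * (∑ k ∈ Finset.Icc 1 b, pi n₁ (m - n₁) k)
          + nu * (∑ k ∈ Finset.range b, pi n₁ (m - n₁) k) := by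
      intro n₁ hn
      have h : n₁ + (m - n₁) = m := by
        simp only [Finset.mem_range, Nat.lt_succ_iff] at hn; omega
      rw [h]
    rw [Finset.sum_congr rfl e]
    simp only [Finset.sum_add_distrib]
    rw [← Finset.mul_sum, ← Finset.mul_sum, ← Finset.mul_sum, ← Finset.mul_sum]
  -- simplify the right-hand side of H, term by term
  have c1 : ∑ n₁ ∈ Finset.range (m+1),
        lam1 * (if 0 < n₁ then 1 else 0) * (∑ k ∈ Finset.Icc 1 b, pi (n₁ - 1) (m - n₁) k)
      = lam1 * ∑ n₁ ∈ Finset.range m, ∑ k ∈ Finset.Icc 1 b, pi n₁ (m - 1 - n₁) k := by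
    calc ∑ n₁ ∈ Finset.range (m+1),
          lam1 * (if 0 < n₁ then 1 else 0) * (∑ k ∈ Finset.Icc 1 b, pi (n₁ - 1) (m - n₁) k)
        = ∑ n₁ ∈ Finset.range (m+1),
            (if 0 < n₁ then lam1 * ∑ k ∈ Finset.Icc 1 b, pi (n₁ - 1) (m - 1 - (n₁ - 1)) k
              else 0) := by
          refine Finset.sum_congr rfl fun n₁ _ => ?_
          split_ifs with h
          · rw [show m - n₁ = m - 1 - (n₁ - 1) from by omega]; ring
          · ring
      _ = ∑ n₁ ∈ Finset.range m, lam1 * ∑ k ∈ Finset.Icc 1 b, pi n₁ (m - 1 - n₁) k :=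
          shift_down m (fun j => lam1 * ∑ k ∈ Finset.Icc 1 b, pi j (m - 1 - j) k)
      _ = _ := (Finset.mul_sum _ _ _).symm
  have c2 : ∑ n₁ ∈ Finset.range (m+1),
        p * lam2 * (if 0 < m - n₁ then 1 else 0) *
          (∑ k ∈ Finset.Icc 1 s, pi n₁ (m - n₁ - 1) k)
      = p * lam2 * ∑ n₁ ∈ Finset.range m, ∑ k ∈ Finset.Icc 1 s, pi n₁ (m - 1 - n₁) k := by
    calc ∑ n₁ ∈ Finset.range (m+1),
          p * lam2 * (if 0 < m - n₁ then 1 else 0) *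
            (∑ k ∈ Finset.Icc 1 s, pi n₁ (m - n₁ - 1) k)
        = ∑ n₁ ∈ Finset.range (m+1),
            (if n₁ < m then p * lam2 * ∑ k ∈ Finset.Icc 1 s, pi n₁ (m - 1 - n₁) k else 0) := by
          refine Finset.sum_congr rfl fun n₁ _ => ?_
          rw [show m - n₁ - 1 = m - 1 - n₁ from by omega]
          by_cases h : n₁ < m
          · rw [if_pos h, if_pos (show 0 < m - n₁ from by omega)]; ring
          · rw [if_neg h, if_neg (show ¬ 0 < m - n₁ from by omega)]; ring
      _ = ∑ n₁ ∈ Finset.range m, p * lam2 * ∑ k ∈ Finset.Icc 1 s, pi n₁ (m - 1 - n₁) k :=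
          cut_last m (fun j => p * lam2 * ∑ k ∈ Finset.Icc 1 s, pi j (m - 1 - j) k)
      _ = _ := (Finset.mul_sum _ _ _).symm
  have c3 : ∑ n₁ ∈ Finset.range (m+1),
        lam2 * (if 0 < m - n₁ then 1 else 0) *
          (∑ k ∈ Finset.Icc (s+1) b, pi n₁ (m - n₁ - 1) k)
      = lam2 * ∑ n₁ ∈ Finset.range m, ∑ k ∈ Finset.Icc (s+1) b, pi n₁ (m - 1 - n₁) k := by
    calc ∑ n₁ ∈ Finset.range (m+1),
          lam2 * (if 0 < m - n₁ then 1 else 0) *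
            (∑ k ∈ Finset.Icc (s+1) b, pi n₁ (m - n₁ - 1) k)
        = ∑ n₁ ∈ Finset.range (m+1),
            (if n₁ < m then lam2 * ∑ k ∈ Finset.Icc (s+1) b, pi n₁ (m - 1 - n₁) k else 0) := by
          refine Finset.sum_congr rfl fun n₁ _ => ?_
          rw [show m - n₁ - 1 = m - 1 - n₁ from by omega]
          by_cases h : n₁ < m
          · rw [if_pos h, if_pos (show 0 < m - n₁ from by omega)]; ring
          · rw [if_neg h, if_neg (show ¬ 0 < m - n₁ from by omega)]; ring
      _ = ∑ n₁ ∈ Finset.range m, lam2 * ∑ k ∈ Finset.Icc (s+1) b, pi n₁ (m - 1 - n₁) k :=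
          cut_last m (fun j => lam2 * ∑ k ∈ Finset.Icc (s+1) b, pi j (m - 1 - j) k)
      _ = _ := (Finset.mul_sum _ _ _).symm
  have c4 : ∑ n₁ ∈ Finset.range (m+1), mu * (∑ k ∈ Finset.Icc 1 b, pi (n₁ + 1) (m - n₁) k)
      = mu * ∑ n₁ ∈ Finset.range (m+1), ∑ k ∈ Finset.Icc 1 b, pi (n₁ + 1) (m + 1 - (n₁ + 1)) k := by
    rw [Finset.mul_sum]
    refine Finset.sum_congr rfl fun n₁ _ => ?_
    rw [show m + 1 - (n₁ + 1) = m - n₁ from by omega]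
  have c5 : ∑ n₁ ∈ Finset.range (m+1),
        mu * (if n₁ = 0 then 1 else 0) * (∑ k ∈ Finset.Icc 1 b, pi n₁ (m - n₁ + 1) k)
      = mu * ∑ k ∈ Finset.Icc 1 b, pi 0 (m + 1 - 0) k := by
    calc ∑ n₁ ∈ Finset.range (m+1),
          mu * (if n₁ = 0 then 1 else 0) * (∑ k ∈ Finset.Icc 1 b, pi n₁ (m - n₁ + 1) k)
        = ∑ n₁ ∈ Finset.range (m+1),
            (if n₁ = 0 then mu * ∑ k ∈ Finset.Icc 1 b, pi n₁ (m - n₁ + 1) k else 0) := by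
          refine Finset.sum_congr rfl fun n₁ _ => ?_
          split_ifs <;> ring
      _ = mu * ∑ k ∈ Finset.Icc 1 b, pi 0 (m - 0 + 1) k :=
          first_term m (fun j => mu * ∑ k ∈ Finset.Icc 1 b, pi j (m - j + 1) k)
      _ = _ := by rw [show m - 0 + 1 = m + 1 - 0 from by omega]
  have c45 : (∑ n₁ ∈ Finset.range (m+1), ∑ k ∈ Finset.Icc 1 b, pi (n₁ + 1) (m + 1 - (n₁ + 1)) k)
        + ∑ k ∈ Finset.Icc 1 b, pi 0 (m + 1 - 0) k
      = ∑ n₁ ∈ Finset.range (m+2), ∑ k ∈ Finset.Icc 1 b, pi n₁ (m + 1 - n₁) k :=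
    (Finset.sum_range_succ' (fun j => ∑ k ∈ Finset.Icc 1 b, pi j (m + 1 - j) k) (m+1)).symm
  have c6 : ∑ n₁ ∈ Finset.range (m+1), nu * (∑ k ∈ Finset.range b, pi n₁ (m - n₁) k)
      = nu * ∑ n₁ ∈ Finset.range (m+1), ∑ k ∈ Finset.range b, pi n₁ (m - n₁) k :=
    (Finset.mul_sum _ _ _).symm
  rw [HL] at H
  rw [show (∑ n₁ ∈ Finset.range (m+1),
        (lam1 * (if 0 < n₁ then 1 else 0) * (∑ k ∈ Finset.Icc 1 b, pi (n₁ - 1) (m - n₁) k)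
          + p * lam2 * (if 0 < m - n₁ then 1 else 0) *
              (∑ k ∈ Finset.Icc 1 s, pi n₁ (m - n₁ - 1) k)
          + lam2 * (if 0 < m - n₁ then 1 else 0) *
              (∑ k ∈ Finset.Icc (s+1) b, pi n₁ (m - n₁ - 1) k)
          + mu * (∑ k ∈ Finset.Icc 1 b, pi (n₁ + 1) (m - n₁) k)
          + mu * (if n₁ = 0 then 1 else 0) * (∑ k ∈ Finset.Icc 1 b, pi n₁ (m - n₁ + 1) k)
          + nu * (∑ k ∈ Finset.range b, pi n₁ (m - n₁) k)))
      = lam1 * (∑ n₁ ∈ Finset.range m, ∑ k ∈ Finset.Icc 1 b, pi n₁ (m - 1 - n₁) k)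
        + p * lam2 * (∑ n₁ ∈ Finset.range m, ∑ k ∈ Finset.Icc 1 s, pi n₁ (m - 1 - n₁) k)
        + lam2 * (∑ n₁ ∈ Finset.range m, ∑ k ∈ Finset.Icc (s+1) b, pi n₁ (m - 1 - n₁) k)
        + mu * (∑ n₁ ∈ Finset.range (m+2), ∑ k ∈ Finset.Icc 1 b, pi n₁ (m + 1 - n₁) k)
        + nu * (∑ n₁ ∈ Finset.range (m+1), ∑ k ∈ Finset.range b, pi n₁ (m - n₁) k) from by
      simp only [Finset.sum_add_distrib]
      rw [c1, c2, c3, c4, c5, c6, ← c45]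
      ring] at H
  linarith [H]

lemma icc_split {s b : ℕ} (hsb : s ≤ b) (f : ℕ → ℝ) :
    ∑ k ∈ Finset.Icc 1 b, f k
      = ∑ k ∈ Finset.Icc 1 s, f k + ∑ k ∈ Finset.Icc (s+1) b, f k := by
  rw [← Finset.sum_union (by simp only [Finset.disjoint_left, Finset.mem_Icc]; omega)]
  apply Finset.sum_congr _ fun _ _ => rfl
  ext k; simp only [Finset.mem_Icc, Finset.mem_union]; omega


theorem stmt_10 (b s : ℕ) (lam1 lam2 mu nu p : ℝ)
    (hb : 2 ≤ b) (hs : 0 < s) (hsb : s < b)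
    (h1 : 0 < lam1) (h2 : 0 < lam2) (hmu : 0 < mu) (hnu : 0 < nu)
    (hp0 : 0 ≤ p) (hp1 : p ≤ 1)
    (pi : ℕ → ℕ → ℕ → ℝ)
    (hnn : ∀ n₁ n₂ k, 0 ≤ pi n₁ n₂ k)
    (hsum : Summable (fun z : ℕ × ℕ => ∑ k ∈ Finset.range (b + 1), pi z.1 z.2 k))
    (hprob : ∑' z : ℕ × ℕ, ∑ k ∈ Finset.range (b + 1), pi z.1 z.2 k = 1)
    (hGB : GlobalBalance b s lam1 lam2 mu nu p pi)
    :
    ∀ n : ℕ,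
      (∑ n₁ ∈ Finset.range (n + 1), ∑ k ∈ Finset.Icc 1 s, pi n₁ (n - n₁) k)
          * (lam1 + p * lam2)
        + (∑ n₁ ∈ Finset.range (n + 1), ∑ k ∈ Finset.Icc (s + 1) b, pi n₁ (n - n₁) k)
          * (lam1 + lam2)
      = (∑ n₁ ∈ Finset.range (n + 2), ∑ k ∈ Finset.Icc 1 b, pi n₁ (n + 1 - n₁) k) * mu := by
  have hsb' : s ≤ b := le_of_lt hsb
  intro n
  induction n with
  | zero =>
    have E := level_balance b s lam1 lam2 mu nu p pi hsb' hGB 0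
    rw [if_neg (lt_irrefl 0)] at E
    simp only [Finset.sum_range_zero, mul_zero, zero_mul, add_zero, zero_add] at E
    linarith [E]
  | succ n ih =>
    have E := level_balance b s lam1 lam2 mu nu p pi hsb' hGB (n+1)
    rw [if_pos (Nat.succ_pos n)] at E
    simp only [Nat.add_sub_cancel, one_mul] at E
    have sp : ∑ n₁ ∈ Finset.range (n+1), ∑ k ∈ Finset.Icc 1 b, pi n₁ (n - n₁) k
        = (∑ n₁ ∈ Finset.range (n+1), ∑ k ∈ Finset.Icc 1 s, pi n₁ (n - n₁) k)
          + ∑ n₁ ∈ Finset.range (n+1), ∑ k ∈ Finset.Icc (s+1) b, pi n₁ (n - n₁) k := by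
      rw [← Finset.sum_add_distrib]
      exact Finset.sum_congr rfl fun n₁ _ => icc_split hsb' (fun k => pi n₁ (n - n₁) k)
    rw [sp] at E
    rw [show (n:ℕ) + 2 = n + 1 + 1 from rfl] at ih
    linarith [E, ih]
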